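/- arXiv:1003.2040 — 7 statements merged into one kernel-verified Lean document; each statement's English description precedes it below -/
import Mathlib

section
/- Let A : ℝ → Matrix (Fin n) (Fin n) ℝ be continuous and periodic of period ω > 0, and let φ be the solution of φ'(s) = A(s) · φ(s) with φ(0) = λ. Then φ is periodic of period ω if and only if ∫₀^ω A(σ) · φ(σ) dσ = 0. -/
/-! By the fundamental theorem of calculus the integral equals `φ ω - φ 0`. Conversely, if
`φ ω = φ 0`, then `s ↦ φ (s + ω)` solves the same ODE (as `A` is `ω`-periodic) with the same
initial value, so it coincides with `φ` by uniqueness of solutions of linear ODEs, whose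
right-hand side is Lipschitz in the state, uniformly on compact time intervals. -/

open Matrix Set Function

section LinearODE

variable {ι : Type*} [Fintype ι] {A : ℝ → Matrix ι ι ℝ} {φ ψ : ℝ → ι → ℝ}

attribute [local instance] Matrix.linftyOpNormedAddCommGroup

theorem Matrix.lipschitzWith_mulVec (M : Matrix ι ι ℝ) : LipschitzWith ‖M‖₊ (M *ᵥ ·) :=
  AddMonoidHomClass.lipschitz_of_bound_nnnorm (mulVecLin M) _ (linfty_opNNNorm_mulVec M)

theorem eq_of_hasDerivAt_mulVec (hA : Continuous A) (hφ : ∀ t, HasDerivAt φ (A t *ᵥ φ t) t)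
    (hψ : ∀ t, HasDerivAt ψ (A t *ᵥ ψ t) t) {t₀ : ℝ} (h : φ t₀ = ψ t₀) : φ = ψ := by
  funext t
  obtain ⟨a, b, ht, ht₀⟩ : ∃ a b, t ∈ Ioo a b ∧ t₀ ∈ Ioo a b :=
    ⟨min t t₀ - 1, max t t₀ + 1, by constructor <;> constructor <;> grind⟩
  obtain ⟨K, hK⟩ := (isCompact_Icc (a := a) (b := b)).exists_bound_of_continuousOn
    hA.continuousOn
  have hLip : ∀ s ∈ Ioo a b, LipschitzOnWith K.toNNReal (A s *ᵥ ·) univ := fun s hs =>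
    ((A s).lipschitzWith_mulVec.weaken <| norm_toNNReal (a := A s) ▸
      Real.toNNReal_mono (hK s (Ioo_subset_Icc_self hs))).lipschitzOnWith
  exact ODE_solution_unique_of_mem_Ioo hLip ht₀ (fun s _ => ⟨hφ s, mem_univ _⟩)
    (fun s _ => ⟨hψ s, mem_univ _⟩) h ht

theorem HasDerivAt.comp_add_const_of_periodic {ω : ℝ} (hAω : Periodic A ω)
    (hφ : ∀ t, HasDerivAt φ (A t *ᵥ φ t) t) (t : ℝ) :
    HasDerivAt (fun s => φ (s + ω)) (A t *ᵥ φ (t + ω)) t := by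
  simpa only [hAω t] using (hφ (t + ω)).comp_add_const t ω

theorem periodic_iff_of_hasDerivAt_mulVec {ω : ℝ} (hA : Continuous A) (hAω : Periodic A ω)
    (hφ : ∀ t, HasDerivAt φ (A t *ᵥ φ t) t) : Periodic φ ω ↔ φ ω = φ 0 := by
  refine ⟨fun h => by simpa using h 0, fun h => ?_⟩
  have hshift := eq_of_hasDerivAt_mulVec hA (HasDerivAt.comp_add_const_of_periodic hAω hφ) hφ
    (t₀ := 0) (by simpa using h)
  exact congrFun hshift

theorem intervalIntegral_mulVec_eq_sub (hA : Continuous A)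
    (hφ : ∀ t, HasDerivAt φ (A t *ᵥ φ t) t) (a b : ℝ) :
    ∫ t in a..b, A t *ᵥ φ t = φ b - φ a :=
  intervalIntegral.integral_eq_sub_of_hasDerivAt (fun t _ => hφ t)
    (Continuous.intervalIntegrable
      (hA.matrix_mulVec (continuous_iff_continuousAt.2 fun t => (hφ t).continuousAt)) a b)

end LinearODE

theorem stmt_0_general {n : ℕ} (ω : ℝ)
    (A : ℝ → Matrix (Fin n) (Fin n) ℝ)
    (hAcont : Continuous fun s => A s)
    (hAper : ∀ s, A (s + ω) = A s)
    (φ : ℝ → Fin n → ℝ)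
    (hφ : ∀ s, HasDerivAt φ (A s *ᵥ φ s) s) :
    (∀ s, φ (s + ω) = φ s) ↔ (∫ σ in (0:ℝ)..ω, A σ *ᵥ φ σ) = 0 := by
  rw [intervalIntegral_mulVec_eq_sub hAcont hφ, sub_eq_zero]
  exact periodic_iff_of_hasDerivAt_mulVec hAcont hAper hφ

/-- Lemma 2.1: the solution of `φ' = A(s)φ`, `φ(0) = λ`, with `A` continuous and ω-periodic,
is periodic of period ω iff `∫₀^ω A(σ) φ(σ) dσ = 0`. -/
theorem stmt_0 {n : ℕ} (ω : ℝ) (hω : 0 < ω)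
    (A : ℝ → Matrix (Fin n) (Fin n) ℝ)
    (hAcont : Continuous fun s => A s)
    (hAper : ∀ s, A (s + ω) = A s)
    (l : Fin n → ℝ) (φ : ℝ → Fin n → ℝ)
    (hφ0 : φ 0 = l)
    (hφ : ∀ s, HasDerivAt φ (A s *ᵥ φ s) s) :
    (∀ s, φ (s + ω) = φ s) ↔ (∫ σ in (0:ℝ)..ω, A σ *ᵥ φ σ) = 0 :=
  stmt_0_general ω A hAcont hAper φ hφ
end

section
/- Let A : ℝ → Matrix (Fin n) (Fin n) ℝ be continuous. Then the function φ(s) = (I + ∑_{k≥1} ξ^{(k)}A(s)) λ, where ξ^{(1)}A(s) = ∫₀^s A(σ) dσ and ξ^{(k)}A(s) = ∫₀^s A(σ) · ξ^{(k-1)}A(σ) dσ, solves the initial value problem φ'(s) = A(s)φ(s), φ(0) = λ. In particular the series converges for all s. -/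
open Matrix

/-- The iterated Peano–Baker integrals: `xi A 0 = I` (auxiliary), and for `k ≥ 1`,
`xi A k s = ∫₀^s A(σ) · xi A (k-1) σ dσ`, so that `xi A 1 s = ∫₀^s A(σ) dσ`. -/
noncomputable def xi {n : ℕ} (A : ℝ → Matrix (Fin n) (Fin n) ℝ) :
    ℕ → ℝ → Matrix (Fin n) (Fin n) ℝ
  | 0, _ => 1
  | k + 1, s => Matrix.of fun i j => ∫ σ in (0:ℝ)..s, (A σ * xi A k σ) i j

/-!
If `‖A σ‖ ≤ C` on `[-R, R]` (operator norm), induction on the recursion gives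
`‖ξ⁽ᵏ⁾A(s)‖ ≤ (C |s|)ᵏ / k!` for `|s| ≤ R`. Hence the series converges, and so does the series of
derivatives `(ξ⁽ᵏ⁺¹⁾A)' = A · ξ⁽ᵏ⁾A`, uniformly on `(-R, R)`. Differentiating termwise,
`(I + ∑ₖ ξ⁽ᵏ⁺¹⁾A)' = A · ∑ₖ ξ⁽ᵏ⁾A = A · (I + ∑ₖ ξ⁽ᵏ⁺¹⁾A)`.
-/

open MeasureTheory Set

theorem Continuous.exists_norm_le_of_abs_le {E : Type*} [SeminormedAddCommGroup E] {f : ℝ → E}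
    (hf : Continuous f) (R : ℝ) : ∃ C, ∀ σ, |σ| ≤ R → ‖f σ‖ ≤ C := by
  obtain ⟨C, hC⟩ := (isCompact_Icc (a := -R) (b := R)).exists_bound_of_continuousOn hf.continuousOn
  exact ⟨C, fun σ hσ => hC σ (abs_le.1 hσ)⟩

theorem integral_abs_pow_of_nonneg (k : ℕ) {s : ℝ} (hs : 0 ≤ s) :
    ∫ σ in (0:ℝ)..s, |σ| ^ k = s ^ (k + 1) / (k + 1) := by
  rw [intervalIntegral.integral_congr (g := fun σ => σ ^ k), integral_pow]
  · simp
  · intro σ hσ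
    rw [uIcc_of_le hs] at hσ
    simp [abs_of_nonneg hσ.1]

theorem abs_integral_abs_pow (k : ℕ) (s : ℝ) :
    |∫ σ in (0:ℝ)..s, |σ| ^ k| = |s| ^ (k + 1) / (k + 1) := by
  rcases le_total 0 s with hs | hs
  · rw [integral_abs_pow_of_nonneg k hs, abs_of_nonneg hs, abs_of_nonneg (by positivity)]
  · have h_even : ∫ σ in (0:ℝ)..s, |σ| ^ k = -∫ σ in (0:ℝ)..-s, |σ| ^ k := by
      rw [← intervalIntegral.integral_symm, ← neg_zero,
        ← intervalIntegral.integral_comp_neg (fun σ => |σ| ^ k)]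
      simp
    rw [h_even, abs_neg, integral_abs_pow_of_nonneg k (neg_nonneg.2 hs), abs_of_nonpos hs,
      abs_of_nonneg (by have := neg_nonneg.2 hs; positivity)]

section MatrixNorm

open scoped Matrix.Norms.Operator Interval

/- The topology induced by the `linftyOp` norm agrees with the product topology of `Matrix` only
after unfolding instances, which instance search does not do; this instance makes the
integrability API available for matrix-valued functions. -/
noncomputable local instance Matrix.linftyOpENormedAddMonoid {m p : Type*} [Fintype m]
    [Fintype p] : ENormedAddMonoid (Matrix m p ℝ) :=
  NormedAddGroup.toENormedAddMonoid

theorem Matrix.intervalIntegral_apply {m p : Type*} [Fintype m] [Fintype p]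
    {f : ℝ → Matrix m p ℝ} {a b : ℝ} (hf : IntervalIntegrable f volume a b) (i : m) (j : p) :
    (∫ σ in a..b, f σ) i j = ∫ σ in a..b, f σ i j :=
  ((entryLinearMap ℝ ℝ i j).toContinuousLinearMap.intervalIntegral_comp_comm hf).symm

variable {n : ℕ} {A : ℝ → Matrix (Fin n) (Fin n) ℝ}

theorem xi_succ_zero (k : ℕ) : xi A (k + 1) 0 = 0 := by
  ext i j
  exact intervalIntegral.integral_same

theorem xi_succ_eq_integral_of_continuous (hA : Continuous A) {k : ℕ}
    (hk : Continuous (xi A k)) (s : ℝ) :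
    xi A (k + 1) s = ∫ σ in (0:ℝ)..s, A σ * xi A k σ := by
  have h_integrand : Continuous fun σ => A σ * xi A k σ := hA.mul hk
  ext i j
  rw [Matrix.intervalIntegral_apply (h_integrand.intervalIntegrable 0 s)]
  rfl

theorem continuous_xi (hA : Continuous A) : ∀ k, Continuous (xi A k)
  | 0 => continuous_const
  | k + 1 => by
    rw [funext (xi_succ_eq_integral_of_continuous hA (continuous_xi hA k))]
    exact intervalIntegral.continuous_primitive
      (fun a b => (hA.mul (continuous_xi hA k)).intervalIntegrable a b) 0

theorem xi_succ_eq_integral (hA : Continuous A) (k : ℕ) (s : ℝ) :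
    xi A (k + 1) s = ∫ σ in (0:ℝ)..s, A σ * xi A k σ :=
  xi_succ_eq_integral_of_continuous hA (continuous_xi hA k) s

theorem hasDerivAt_xi_succ (hA : Continuous A) (k : ℕ) (s : ℝ) :
    HasDerivAt (xi A (k + 1)) (A s * xi A k s) s := by
  rw [funext (xi_succ_eq_integral hA k)]
  exact ((hA.mul (continuous_xi hA k)).integral_hasStrictDerivAt 0 s).hasDerivAt

theorem norm_xi_le (hA : Continuous A) {R C : ℝ} (hC : ∀ σ, |σ| ≤ R → ‖A σ‖ ≤ C) :
    ∀ k s, |s| ≤ R → ‖xi A k s‖ ≤ (C * |s|) ^ k / k.factorial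
  | 0, s, _ => by
    rw [pow_zero, Nat.factorial_zero, Nat.cast_one, div_one, xi, ← diagonal_one,
      linfty_opNorm_diagonal]
    exact pi_norm_le_iff_of_nonneg zero_le_one |>.2 fun _ => norm_one.le
  | k + 1, s, hs => by
    have hC0 : 0 ≤ C := (norm_nonneg _).trans (hC s hs)
    have h_integrand : ∀ σ ∈ Ι (0:ℝ) s,
        ‖A σ * xi A k σ‖ ≤ C ^ (k + 1) / k.factorial * |σ| ^ k := by
      intro σ hσ
      have hσs : |σ| ≤ |s| := by simpa using abs_sub_left_of_mem_uIcc (uIoc_subset_uIcc hσ)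
      calc ‖A σ * xi A k σ‖ ≤ ‖A σ‖ * ‖xi A k σ‖ := norm_mul_le _ _
        _ ≤ C * ((C * |σ|) ^ k / k.factorial) :=
          mul_le_mul (hC σ (hσs.trans hs)) (norm_xi_le hA hC k σ (hσs.trans hs))
            (norm_nonneg _) hC0
        _ = C ^ (k + 1) / k.factorial * |σ| ^ k := by ring
    calc ‖xi A (k + 1) s‖
        ≤ |∫ σ in (0:ℝ)..s, C ^ (k + 1) / k.factorial * |σ| ^ k| := by
          rw [xi_succ_eq_integral hA]
          exact intervalIntegral.norm_integral_le_abs_of_norm_le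
            ((ae_restrict_iff' measurableSet_uIoc).2 (ae_of_all _ h_integrand))
            ((continuous_const.mul (continuous_abs.pow k)).intervalIntegrable 0 s)
      _ = (C * |s|) ^ (k + 1) / (k + 1).factorial := by
          rw [intervalIntegral.integral_const_mul, abs_mul, abs_integral_abs_pow,
            abs_of_nonneg (by positivity), Nat.factorial_succ]
          push_cast
          field_simp
          ring

theorem summable_xi (hA : Continuous A) (s : ℝ) : Summable fun k => xi A k s := by
  obtain ⟨C, hC⟩ := hA.exists_norm_le_of_abs_le |s|
  exact .of_norm_bounded (Real.summable_pow_div_factorial (C * |s|))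
    fun k => norm_xi_le hA hC k s le_rfl

theorem hasDerivAt_tsum_xi_succ (hA : Continuous A) (s : ℝ) :
    HasDerivAt (fun t => ∑' k, xi A (k + 1) t) (A s * ∑' k, xi A k s) s := by
  set R := |s| + 1
  obtain ⟨C, hC⟩ := hA.exists_norm_le_of_abs_le R
  have hsR : s ∈ Ioo (-R) R := abs_lt.1 (lt_add_one _)
  have hC0 : 0 ≤ C := (norm_nonneg _).trans (hC s (abs_le.2 ⟨hsR.1.le, hsR.2.le⟩))
  have h_deriv_le : ∀ k, ∀ y ∈ Ioo (-R) R,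
      ‖A y * xi A k y‖ ≤ C * ((C * R) ^ k / k.factorial) := by
    intro k y hy
    have hyR : |y| ≤ R := abs_le.2 ⟨hy.1.le, hy.2.le⟩
    calc ‖A y * xi A k y‖ ≤ ‖A y‖ * ‖xi A k y‖ := norm_mul_le _ _
      _ ≤ C * ((C * |y|) ^ k / k.factorial) :=
        mul_le_mul (hC y hyR) (norm_xi_le hA hC k y hyR) (norm_nonneg _) hC0
      _ ≤ C * ((C * R) ^ k / k.factorial) := by gcongr
  rw [← (summable_xi hA s).tsum_mul_left]
  exact hasDerivAt_tsum_of_isPreconnected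
    ((Real.summable_pow_div_factorial (C * R)).mul_left C) isOpen_Ioo isPreconnected_Ioo
    (fun k y _ => hasDerivAt_xi_succ hA k y) h_deriv_le hsR
    ((summable_nat_add_iff 1).2 (summable_xi hA s)) hsR

theorem hasDerivAt_one_add_tsum_xi_succ_mulVec (hA : Continuous A) (l : Fin n → ℝ) (s : ℝ) :
    HasDerivAt (fun t => (1 + ∑' k, xi A (k + 1) t) *ᵥ l)
      (A s *ᵥ ((1 + ∑' k, xi A (k + 1) s) *ᵥ l)) s := by
  have h_series : ∑' k, xi A k s = 1 + ∑' k, xi A (k + 1) s :=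
    (summable_xi hA s).tsum_eq_zero_add
  let mulVecL : Matrix (Fin n) (Fin n) ℝ →L[ℝ] Fin n → ℝ :=
    ((mulVecBilin ℝ ℝ).flip l).toContinuousLinearMap
  rw [mulVec_mulVec, ← h_series]
  exact mulVecL.hasFDerivAt.comp_hasDerivAt s ((hasDerivAt_tsum_xi_succ hA s).const_add 1)

end MatrixNorm

/-- The Picard/Peano–Baker series `φ(s) = (I + ∑_{k≥1} ξ⁽ᵏ⁾A(s)) λ` converges and solves the
initial value problem `φ' = A(s)φ`, `φ(0) = λ`. -/
theorem stmt_1 {n : ℕ} (A : ℝ → Matrix (Fin n) (Fin n) ℝ)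
    (hAcont : Continuous fun s => A s) (l : Fin n → ℝ) :
    (∀ s : ℝ, Summable fun k : ℕ => xi A (k + 1) s) ∧
    (fun s : ℝ => ((1 : Matrix (Fin n) (Fin n) ℝ) + ∑' k : ℕ, xi A (k + 1) s) *ᵥ l) 0 = l ∧
    ∀ s : ℝ, HasDerivAt
      (fun t : ℝ => ((1 : Matrix (Fin n) (Fin n) ℝ) + ∑' k : ℕ, xi A (k + 1) t) *ᵥ l)
      (A s *ᵥ (((1 : Matrix (Fin n) (Fin n) ℝ) + ∑' k : ℕ, xi A (k + 1) s) *ᵥ l)) s :=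
  ⟨fun s => (summable_nat_add_iff 1).2 (summable_xi hAcont s),
    by simp only [xi_succ_zero, tsum_zero, add_zero, one_mulVec],
    hasDerivAt_one_add_tsum_xi_succ_mulVec hAcont l⟩
end

section
/- Let Φ : ℝ → Matrix (Fin n) (Fin n) ℝ satisfy Φ' = A·Φ, Φ(0) = I, with A continuous and ω-periodic, and suppose Φ(ω) = I (i.e., M(ω) = 0 where M = Φ − I). Let V₁(s) be the first row of Φ(s) applied to an initial orthonormal frame; then the curve x(s) = ∫₀^s V₁(t) dt is periodic of period ω if and only if ω·a₁ⱼ + ∑ᵢ aᵢⱼ ∫₀^ω m₁ᵢ(s) ds = 0 for all j, where (aᵢⱼ) is the invertible initial frame matrix and m₁ᵢ are the entries of the first row of M. Since (aᵢⱼ) is invertible, this is equivalent to ω + ∫₀^ω m₁₁ ds = 0 and ∫₀^ω m₁ᵢ ds = 0 for i = 2,…,n. -/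
/-!
Because `A` is `ω`-periodic, `t ↦ Φ (t + ω)` solves the same linear equation `Φ' = A Φ` as `Φ`,
and `Φ ω = I = Φ 0`; `A` is continuous and periodic, hence bounded, so the equation is globally
Lipschitz and uniqueness of solutions makes `Φ` itself `ω`-periodic. The integrand `V₁ = (Φ a)₀`
of `x` is then periodic, so `x (s + ω) - x s = ∫₀^ω V₁` for every `s`, and `x` is closed iff
`c ᵥ* a = 0`, where `c = ∫₀^ω Φ₀ = ω e₀ + ∫₀^ω (Φ - 1)₀`. As `a` is invertible, this says `c = 0`.
-/

open Matrix Function Set MeasureTheory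

section PeriodicODE

variable {E : Type*} [NormedAddCommGroup E] [NormedSpace ℝ E]

theorem ODE_solution_periodic {v : ℝ → E → E} {f : ℝ → E} {ω : ℝ} {K : NNReal}
    (hv : ∀ t, LipschitzWith K (v t)) (hvω : Periodic v ω)
    (hf : ∀ t, HasDerivAt f (v t (f t)) t) (hfω : f ω = f 0) : Periodic f ω := by
  have hshift (t : ℝ) : HasDerivAt (fun t ↦ f (t + ω)) (v t (f (t + ω))) t := by
    simpa [hvω t] using (hf (t + ω)).comp_add_const t ω
  exact congrFun <| ODE_solution_unique_univ (s := fun _ ↦ univ) (t₀ := 0)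
    (fun t ↦ (hv t).lipschitzOnWith) (fun t ↦ ⟨hshift t, trivial⟩) (fun t ↦ ⟨hf t, trivial⟩)
    (by simpa using hfω)

end PeriodicODE

section MatrixODE

-- The `L∞` operator norm is submultiplicative, so `M ↦ A t * M` is `‖A t‖`-Lipschitz.
attribute [local instance] Matrix.linftyOpNormedAddCommGroup Matrix.linftyOpNormedSpace

theorem Matrix.periodic_of_hasDerivAt_mul {m : Type*} [Fintype m] {A Φ : ℝ → Matrix m m ℝ}
    {ω : ℝ} (hω : ω ≠ 0) (hA : Continuous A) (hAω : Periodic A ω)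
    (hΦ : ∀ t i j, HasDerivAt (fun t ↦ Φ t i j) ((A t * Φ t) i j) t) (hΦω : Φ ω = Φ 0) :
    Periodic Φ ω := by
  obtain ⟨C, hC⟩ := (hAω.isBounded_of_continuous hω hA).exists_norm_le
  have hlip (t : ℝ) : LipschitzWith C.toNNReal (A t * ·) := by
    refine LipschitzWith.of_dist_le_mul fun M N ↦ ?_
    rw [dist_eq_norm, dist_eq_norm, ← Matrix.mul_sub]
    refine (linfty_opNorm_mul _ _).trans ?_
    gcongr
    exact (hC _ ⟨t, rfl⟩).trans (Real.le_coe_toNNReal C)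
  refine ODE_solution_periodic hlip (fun t ↦ by simp only [hAω t]) (fun t ↦ ?_) hΦω
  exact hasDerivAt_pi.2 fun i ↦ hasDerivAt_pi.2 fun j ↦ hΦ t i j

end MatrixODE

section IntervalIntegral

variable {E : Type*} [NormedAddCommGroup E] [NormedSpace ℝ E]

theorem intervalIntegral.eval_integral [CompleteSpace E] {ι : Type*} [Fintype ι]
    {f : ℝ → ι → E} {a b : ℝ} (hf : IntervalIntegrable f volume a b) (i : ι) :
    (∫ t in a..b, f t) i = ∫ t in a..b, f t i :=
  ((ContinuousLinearMap.proj (R := ℝ) (φ := fun _ : ι ↦ E) i).intervalIntegral_comp_comm hf).symm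

theorem intervalIntegral.integral_vecMul {ι κ : Type*} [Fintype ι] [Fintype κ] {f : ℝ → ι → ℝ}
    {a b : ℝ} (hf : IntervalIntegrable f volume a b) (M : Matrix ι κ ℝ) :
    ∫ t in a..b, f t ᵥ* M = (∫ t in a..b, f t) ᵥ* M :=
  (Matrix.vecMulLinear M).toContinuousLinearMap.intervalIntegral_comp_comm hf

theorem Function.Periodic.forall_intervalIntegral_add_eq_iff {f : ℝ → E} {ω : ℝ}
    (hf : Periodic f ω) (hint : ∀ a b, IntervalIntegrable f volume a b) :
    (∀ s, ∫ t in 0..s + ω, f t = ∫ t in 0..s, f t) ↔ ∫ t in 0..ω, f t = 0 := by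
  simp only [hf.intervalIntegral_add_eq_add 0 _ hint, zero_add, add_eq_left, forall_const]

end IntervalIntegral

/-- Closedness criterion in terms of the fundamental matrix and an initial orthonormal frame:
with `Φ' = AΦ`, `Φ(0) = I`, `A` continuous ω-periodic, `Φ(ω) = I`, `a` invertible, `M = Φ − I`
and `x(s) = ∫₀^s (Φ(t)·a)` first row, the curve `x` is ω-periodic iff
`ω·a₁ⱼ + ∑ᵢ aᵢⱼ ∫₀^ω m₁ᵢ = 0` for all `j`, which in turn is equivalent to
`ω + ∫₀^ω m₁₁ = 0` and `∫₀^ω m₁ᵢ = 0` for `i ≠ 1`. -/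
theorem stmt_5 {n : ℕ} (ω : ℝ) (hω : 0 < ω)
    (A Φ : ℝ → Matrix (Fin (n+1)) (Fin (n+1)) ℝ)
    (hAcont : Continuous fun s => A s)
    (hAper : ∀ s, A (s + ω) = A s)
    (hΦ : ∀ s i j, HasDerivAt (fun t => Φ t i j) ((A s * Φ s) i j) s)
    (hΦ0 : Φ 0 = 1)
    (hΦω : Φ ω = 1)
    (a : Matrix (Fin (n+1)) (Fin (n+1)) ℝ) (ha : IsUnit a)
    (x : ℝ → Fin (n+1) → ℝ)
    (hx : ∀ s, x s = ∫ t in (0:ℝ)..s, (Φ t * a) 0) :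
    ((∀ s, x (s + ω) = x s) ↔
      ∀ j, ω * a 0 j + ∑ i, a i j * ∫ s in (0:ℝ)..ω, (Φ s - 1) 0 i = 0) ∧
    ((∀ j, ω * a 0 j + ∑ i, a i j * ∫ s in (0:ℝ)..ω, (Φ s - 1) 0 i = 0) ↔
      (ω + ∫ s in (0:ℝ)..ω, (Φ s - 1) 0 0 = 0 ∧
        ∀ i, i ≠ 0 → (∫ s in (0:ℝ)..ω, (Φ s - 1) 0 i) = 0)) := by
  have hΦper : Periodic Φ ω :=
    Matrix.periodic_of_hasDerivAt_mul hω.ne' hAcont hAper hΦ (by rw [hΦω, hΦ0])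
  have hrow_cont : Continuous fun t ↦ Φ t 0 := continuous_pi fun i ↦
    continuous_iff_continuousAt.2 fun t ↦ (hΦ t 0 i).continuousAt
  set c := ∫ t in (0:ℝ)..ω, Φ t 0
  have hm (i) : ∫ s in (0:ℝ)..ω, (Φ s - 1) 0 i =
      c i - ω * (1 : Matrix (Fin (n+1)) (Fin (n+1)) ℝ) 0 i := by
    simp only [Matrix.sub_apply]
    rw [intervalIntegral.integral_sub (f := fun s ↦ Φ s 0 i)
      (((continuous_apply i).comp hrow_cont).intervalIntegrable _ _) intervalIntegrable_const,
      intervalIntegral.integral_const,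
      ← intervalIntegral.eval_integral (hrow_cont.intervalIntegrable 0 ω), sub_zero, smul_eq_mul]
  have hclosed : (∀ s, x (s + ω) = x s) ↔ c ᵥ* a = 0 := by
    simp_rw [hx, mul_apply_eq_vecMul]
    rw [Periodic.forall_intervalIntegral_add_eq_iff (fun t ↦ by simp only [hΦper t])
      (fun _ _ ↦ (hrow_cont.matrix_vecMul continuous_const).intervalIntegrable _ _),
      intervalIntegral.integral_vecMul (hrow_cont.intervalIntegrable 0 ω)]
  have hcond (j) : ω * a 0 j + ∑ i, a i j * ∫ s in (0:ℝ)..ω, (Φ s - 1) 0 i = (c ᵥ* a) j := by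
    simp only [hm]
    simp [vecMul, dotProduct, one_apply, mul_sub, Finset.sum_sub_distrib, mul_comm]
  have hrow : (ω + ∫ s in (0:ℝ)..ω, (Φ s - 1) 0 0 = 0 ∧
      ∀ i, i ≠ 0 → (∫ s in (0:ℝ)..ω, (Φ s - 1) 0 i) = 0) ↔ c = 0 := by
    simp only [hm]
    simp [funext_iff, Fin.forall_fin_succ, one_apply, (Fin.succ_ne_zero _).symm]
  have hvec : (∀ j, (c ᵥ* a) j = 0) ↔ c ᵥ* a = 0 := funext_iff.symm
  simp only [hcond, hrow, hvec]
  exact ⟨hclosed, (vecMul_injective_of_isUnit ha).eq_iff' (zero_vecMul a)⟩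
end

section
/- Let A be the constant 3×3 matrix A = ![![0, k_g, -ε k_n], ![k_g, 0, ε τ_g], ![k_n, τ_g, 0]] with real constants k_g, k_n, τ_g and ε = ±1 (the Darboux frame matrix of a curve with constant geodesic curvature, normal curvature and geodesic torsion on a timelike surface in Minkowski 3-space). Set μ = k_g² − ε k_n² + ε τ_g². Then the (1,1) entry of exp(sA) − I is (k_g² − ε k_n²)·(cosh(√μ · s) − 1)/μ when μ > 0. -/
open Matrix

/-!
The Darboux matrix is traceless with zero determinant, so its characteristic polynomial is
`λ³ − μλ` and `A³ = μ A`. Hence `A^(2k+1) = μ^k A` and `A^(2k+2) = μ^k A²`, and the even and odd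
parts of the exponential series collapse to the series of `cosh` and `sinh` at `√μ s`. The
`(1,1)` entry of `A` vanishes, while that of `A²` is `k_g² − ε k_n²`.
-/

open NormedSpace Nat

section PowThree

variable {R 𝔸 : Type*} [CommSemiring R] [Semiring 𝔸] [Algebra R 𝔸] {a : 𝔸} {μ : R}

theorem pow_two_mul_add_one_of_pow_three_eq_smul (ha : a ^ 3 = μ • a) (k : ℕ) :
    a ^ (2 * k + 1) = μ ^ k • a := by
  induction k with
  | zero => simp
  | succ k ih =>
    rw [show 2 * (k + 1) + 1 = 2 + (2 * k + 1) by ring, pow_add, ih, mul_smul_comm,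
      ← pow_succ, ha, smul_smul, ← pow_succ]

theorem pow_two_mul_add_two_of_pow_three_eq_smul (ha : a ^ 3 = μ • a) (k : ℕ) :
    a ^ (2 * k + 2) = μ ^ k • a ^ 2 := by
  rw [pow_succ, pow_two_mul_add_one_of_pow_three_eq_smul ha, smul_mul_assoc, ← sq]

end PowThree

section ExpOfPowThree

variable {𝔸 : Type*} [NormedRing 𝔸] [NormedAlgebra ℝ 𝔸] {a : 𝔸} {μ : ℝ}

theorem hasSum_expSeries_odd_of_pow_three_eq_smul (hμ : 0 < μ) (ha : a ^ 3 = μ • a)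
    (s : ℝ) :
    HasSum (fun k => ((2 * k + 1)! : ℝ)⁻¹ • (s • a) ^ (2 * k + 1))
      ((Real.sinh (√μ * s) / √μ) • a) := by
  have hr : √μ ≠ 0 := (Real.sqrt_pos.mpr hμ).ne'
  convert ((Real.hasSum_sinh (√μ * s)).div_const √μ).smul_const a using 2 with k
  rw [smul_pow, pow_two_mul_add_one_of_pow_three_eq_smul ha, smul_smul, smul_smul]
  congr 1
  rw [mul_pow, pow_succ √μ, pow_mul, Real.sq_sqrt hμ.le]
  field_simp

theorem hasSum_expSeries_even_of_pow_three_eq_smul (hμ : 0 < μ) (ha : a ^ 3 = μ • a)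
    (s : ℝ) :
    HasSum (fun k => ((2 * k)! : ℝ)⁻¹ • (s • a) ^ (2 * k))
      (1 + ((Real.cosh (√μ * s) - 1) / μ) • a ^ 2) := by
  -- the `k = 0` term is `1`, not `a² / μ`, so split it off before comparing with `cosh`
  have hcosh : HasSum (fun k => (√μ * s) ^ (2 * (k + 1)) / (2 * (k + 1))!)
      (Real.cosh (√μ * s) - 1) := by
    simpa only [Finset.sum_range_one, mul_zero, pow_zero, factorial_zero, cast_one, div_one]
      using (hasSum_nat_add_iff' 1).mpr (Real.hasSum_cosh (√μ * s))
  have hshift : HasSum (fun k => ((2 * (k + 1))! : ℝ)⁻¹ • (s • a) ^ (2 * (k + 1)))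
      (((Real.cosh (√μ * s) - 1) / μ) • a ^ 2) := by
    convert (hcosh.div_const μ).smul_const (a ^ 2) using 2 with k
    rw [smul_pow, show 2 * (k + 1) = 2 * k + 2 by ring,
      pow_two_mul_add_two_of_pow_three_eq_smul ha, smul_smul, smul_smul]
    congr 1
    rw [mul_pow, show 2 * k + 2 = 2 * (k + 1) by ring, pow_mul √μ, Real.sq_sqrt hμ.le,
      pow_succ μ]
    field_simp
  have h :=
    (hasSum_nat_add_iff (f := fun k => ((2 * k)! : ℝ)⁻¹ • (s • a) ^ (2 * k)) 1).mp hshift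
  rwa [Finset.sum_range_one, mul_zero, pow_zero, factorial_zero, cast_one, inv_one, one_smul,
    add_comm] at h

theorem exp_smul_of_pow_three_eq_smul [CompleteSpace 𝔸] (hμ : 0 < μ) (ha : a ^ 3 = μ • a)
    (s : ℝ) :
    exp (s • a) =
      1 + (Real.sinh (√μ * s) / √μ) • a + ((Real.cosh (√μ * s) - 1) / μ) • a ^ 2 := by
  refine (exp_series_hasSum_exp' (𝕂 := ℝ) (s • a)).unique ?_
  rw [add_right_comm]
  exact (hasSum_expSeries_even_of_pow_three_eq_smul hμ ha s).even_add_odd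
    (hasSum_expSeries_odd_of_pow_three_eq_smul hμ ha s)

end ExpOfPowThree

theorem darbouxMatrix_pow_three {R : Type*} [CommRing R] (kg kn τg ε : R) :
    !![0, kg, -ε * kn; kg, 0, ε * τg; kn, τg, 0] ^ 3 =
      (kg ^ 2 - ε * kn ^ 2 + ε * τg ^ 2) • !![0, kg, -ε * kn; kg, 0, ε * τg; kn, τg, 0] := by
  ext i j
  fin_cases i <;> fin_cases j <;> simp [pow_succ, mul_apply, Fin.sum_univ_succ] <;> ring

theorem stmt_6_general (kg kn τg ε : ℝ)
    (μ : ℝ) (hμdef : μ = kg ^ 2 - ε * kn ^ 2 + ε * τg ^ 2) (hμ : 0 < μ)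
    (A : Matrix (Fin 3) (Fin 3) ℝ)
    (hA : A = !![0, kg, -ε * kn; kg, 0, ε * τg; kn, τg, 0]) (s : ℝ) :
    (NormedSpace.exp (s • A) - 1) 0 0 =
      (kg ^ 2 - ε * kn ^ 2) * (Real.cosh (Real.sqrt μ * s) - 1) / μ := by
  have hA3 : A ^ 3 = μ • A := by rw [hA, hμdef]; exact darbouxMatrix_pow_three kg kn τg ε
  have hA00 : A 0 0 = 0 := by rw [hA]; rfl
  have hA2 : (A ^ 2) 0 0 = kg ^ 2 - ε * kn ^ 2 := by
    rw [hA]; simp [sq, mul_apply, Fin.sum_univ_succ, sub_eq_add_neg, mul_assoc]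
  have hexp : exp (s • A) =
      1 + (Real.sinh (√μ * s) / √μ) • A + ((Real.cosh (√μ * s) - 1) / μ) • A ^ 2 := by
    -- any submultiplicative norm will do; `exp` itself depends only on the topology
    let : NormedRing (Matrix (Fin 3) (Fin 3) ℝ) := Matrix.linftyOpNormedRing
    let : NormedAlgebra ℝ (Matrix (Fin 3) (Fin 3) ℝ) := Matrix.linftyOpNormedAlgebra
    exact exp_smul_of_pow_three_eq_smul hμ hA3 s
  rw [hexp, add_assoc, add_sub_cancel_left, Matrix.add_apply,
    Matrix.smul_apply, Matrix.smul_apply, hA00, hA2, smul_eq_mul, smul_eq_mul]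
  ring

/-- For the constant Darboux matrix `A` with `μ = k_g² − ε k_n² + ε τ_g² > 0`, the (1,1) entry
of `exp(sA) − I` equals `(k_g² − ε k_n²)(cosh(√μ s) − 1)/μ`. -/
theorem stmt_6 (kg kn τg ε : ℝ) (hε : ε = 1 ∨ ε = -1)
    (μ : ℝ) (hμdef : μ = kg ^ 2 - ε * kn ^ 2 + ε * τg ^ 2) (hμ : 0 < μ)
    (A : Matrix (Fin 3) (Fin 3) ℝ)
    (hA : A = !![0, kg, -ε * kn; kg, 0, ε * τg; kn, τg, 0]) (s : ℝ) :
    (NormedSpace.exp (s • A) - 1) 0 0 =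
      (kg ^ 2 - ε * kn ^ 2) * (Real.cosh (Real.sqrt μ * s) - 1) / μ :=
  stmt_6_general kg kn τg ε μ hμdef hμ A hA s
end

section
/- Let ε = ±1, let k_g, k_n, τ_g be real constants with k_g² − ε k_n² + ε τ_g² < 0, set θ = √(ε k_n² − ε τ_g² − k_g²), and let A = ![![0, k_g, -ε k_n], ![k_g, 0, ε τ_g], ![k_n, τ_g, 0]]. Then exp(sA) = I + A·sin(θs)/θ + A²·(1 − cos(θs))/θ². -/
/-!
Since `x³ = -θ² x`, the powers of `x` collapse to `x^(2n+1) = (-θ²)ⁿ x` and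
`x^(2n+2) = (-θ²)ⁿ x²`. Splitting the exponential series of `s x` into odd and even terms
therefore leaves scalar series in `x` and `x²`, which are the Taylor series of
`sin (θ s) / θ` and `(1 - cos (θ s)) / θ²`.
-/

open Matrix
open scoped Nat
open NormedSpace

section CubeRelation

variable {R 𝔸 : Type*} [CommSemiring R] [Semiring 𝔸] [Algebra R 𝔸] {x : 𝔸} {c : R}

theorem pow_two_mul_add_one_of_pow_three_eq_smul_s8 (hx : x ^ 3 = c • x) (n : ℕ) :
    x ^ (2 * n + 1) = c ^ n • x := by
  induction n with
  | zero => simp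
  | succ n ih =>
    rw [show 2 * (n + 1) + 1 = 2 * n + 1 + 2 by ring, pow_add, ih, smul_mul_assoc, ← pow_succ',
      hx, smul_smul, pow_succ]

theorem pow_two_mul_add_two_of_pow_three_eq_smul_s8 (hx : x ^ 3 = c • x) (n : ℕ) :
    x ^ (2 * n + 2) = c ^ n • x ^ 2 := by
  rw [pow_succ, pow_two_mul_add_one_of_pow_three_eq_smul_s8 hx, smul_mul_assoc, ← sq]

end CubeRelation

theorem Real.hasSum_sin_mul_div {θ : ℝ} (hθ : θ ≠ 0) (s : ℝ) :
    HasSum (fun n : ℕ => ((2 * n + 1)! : ℝ)⁻¹ * s ^ (2 * n + 1) * (-θ ^ 2) ^ n)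
      (Real.sin (θ * s) / θ) := by
  refine ((Real.hasSum_sin (θ * s)).div_const θ).congr_fun fun n => ?_
  rw [neg_pow, ← pow_mul]
  field_simp
  ring

theorem Real.hasSum_one_sub_cos_mul_div {θ : ℝ} (hθ : θ ≠ 0) (s : ℝ) :
    HasSum (fun n : ℕ => ((2 * n + 2)! : ℝ)⁻¹ * s ^ (2 * n + 2) * (-θ ^ 2) ^ n)
      ((1 - Real.cos (θ * s)) / θ ^ 2) := by
  have htail := (hasSum_nat_add_iff' 1).2 (Real.hasSum_cos (θ * s))
  simp only [Finset.sum_range_one, pow_zero, mul_zero, Nat.factorial_zero, Nat.cast_one, div_one,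
    mul_one, mul_add_one] at htail
  rw [show (1 - Real.cos (θ * s)) / θ ^ 2 = -(θ ^ 2)⁻¹ * (Real.cos (θ * s) - 1) by ring]
  refine (htail.mul_left _).congr_fun fun n => ?_
  rw [neg_pow, ← pow_mul]
  field_simp
  ring

variable {𝔸 : Type*} [Ring 𝔸] [Algebra ℝ 𝔸] [TopologicalSpace 𝔸] [IsTopologicalRing 𝔸]
  [ContinuousSMul ℝ 𝔸] [T2Space 𝔸]

theorem exp_smul_eq_of_pow_three_eq {x : 𝔸} {θ : ℝ} (hθ : θ ≠ 0) (hx : x ^ 3 = (-θ ^ 2) • x)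
    (s : ℝ) :
    exp (s • x) = 1 + (Real.sin (θ * s) / θ) • x + ((1 - Real.cos (θ * s)) / θ ^ 2) • x ^ 2 := by
  rw [exp_eq_tsum ℝ, add_right_comm]
  refine HasSum.tsum_eq (HasSum.even_add_odd ?_ ?_)
  · have htail : HasSum (fun n : ℕ => ((2 * (n + 1))! : ℝ)⁻¹ • (s • x) ^ (2 * (n + 1)))
        (((1 - Real.cos (θ * s)) / θ ^ 2) • x ^ 2) :=
      ((Real.hasSum_one_sub_cos_mul_div hθ s).smul_const (x ^ 2)).congr_fun fun n => by
        simp only [mul_add_one, smul_pow, pow_two_mul_add_two_of_pow_three_eq_smul_s8 hx, smul_smul,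
          mul_assoc]
    have h := HasSum.zero_add (f := fun n : ℕ => ((2 * n)! : ℝ)⁻¹ • (s • x) ^ (2 * n)) htail
    simpa only [mul_zero, pow_zero, Nat.factorial_zero, Nat.cast_one, inv_one, one_smul] using h
  · refine ((Real.hasSum_sin_mul_div hθ s).smul_const x).congr_fun fun n => ?_
    simp only [smul_pow, pow_two_mul_add_one_of_pow_three_eq_smul_s8 hx, smul_smul, mul_assoc]

theorem darboux_matrix_pow_three (kg kn τg ε : ℝ) :
    !![0, kg, -ε * kn; kg, 0, ε * τg; kn, τg, 0] ^ 3 =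
      (kg ^ 2 - ε * kn ^ 2 + ε * τg ^ 2) • !![0, kg, -ε * kn; kg, 0, ε * τg; kn, τg, 0] := by
  rw [pow_three]
  ext i j
  fin_cases i <;> fin_cases j <;> simp [Matrix.mul_apply, Fin.sum_univ_three] <;> ring

theorem stmt_8_general (kg kn τg ε : ℝ)
    (hneg : kg ^ 2 - ε * kn ^ 2 + ε * τg ^ 2 < 0)
    (θ : ℝ) (hθ : θ = Real.sqrt (ε * kn ^ 2 - ε * τg ^ 2 - kg ^ 2))
    (A : Matrix (Fin 3) (Fin 3) ℝ)
    (hA : A = !![0, kg, -ε * kn; kg, 0, ε * τg; kn, τg, 0]) (s : ℝ) :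
    NormedSpace.exp (s • A) =
      1 + (Real.sin (θ * s) / θ) • A + ((1 - Real.cos (θ * s)) / θ ^ 2) • (A * A) := by
  have hθ_sq : θ ^ 2 = ε * kn ^ 2 - ε * τg ^ 2 - kg ^ 2 := by
    rw [hθ]
    exact Real.sq_sqrt (by linarith)
  have hθ_ne : θ ≠ 0 := by
    rw [hθ]
    exact (Real.sqrt_pos.2 (by linarith)).ne'
  have hA_cube : A ^ 3 = (-θ ^ 2) • A := by
    rw [hA, darboux_matrix_pow_three, hθ_sq, neg_sub, sub_add]
  rw [exp_smul_eq_of_pow_three_eq hθ_ne hA_cube, sq A]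

/-- Rodrigues-type formula: if `k_g² − ε k_n² + ε τ_g² < 0` and
`θ = √(ε k_n² − ε τ_g² − k_g²)`, then `exp(sA) = I + (sin θs / θ)A + ((1 − cos θs)/θ²)A²`. -/
theorem stmt_8 (kg kn τg ε : ℝ) (hε : ε = 1 ∨ ε = -1)
    (hneg : kg ^ 2 - ε * kn ^ 2 + ε * τg ^ 2 < 0)
    (θ : ℝ) (hθ : θ = Real.sqrt (ε * kn ^ 2 - ε * τg ^ 2 - kg ^ 2))
    (A : Matrix (Fin 3) (Fin 3) ℝ)
    (hA : A = !![0, kg, -ε * kn; kg, 0, ε * τg; kn, τg, 0]) (s : ℝ) :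
    NormedSpace.exp (s • A) =
      1 + (Real.sin (θ * s) / θ) • A + ((1 - Real.cos (θ * s)) / θ ^ 2) • (A * A) :=
  stmt_8_general kg kn τg ε hneg θ hθ A hA s
end

section
/- Let ε = ±1 and k_g, k_n, τ_g be real constants, A = ![![0, k_g, -ε k_n], ![k_g, 0, ε τ_g], ![k_n, τ_g, 0]], and ω > 0. If τ_g = 0, ε k_n² − k_g² > 0, and √(ε k_n² − k_g²) = 2kπ/ω for some nonzero integer k, then exp(ωA) = I and the first row of ∫₀^ω (exp(sA) − I) ds equals (−ω, 0, 0). -/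
/-!
With `τ_g = 0` the matrix `A` satisfies `A³ = -θ² A` for `θ = √(ε k_n² − k_g²)`, so `exp (s A)` is
given by Rodrigues' formula `1 + (sin θs / θ) A + ((1 − cos θs) / θ²) A²`. The frequency condition
says `θω ∈ 2πℤ`: then `exp (ω A) = 1`, and the sine and cosine terms integrate to zero over
`[0, ω]`, leaving `∫₀^ω (exp (s A) − 1) ds = (ω / θ²) A²`, whose first row is `(−ω, 0, 0)`.
-/

open Matrix NormedSpace
open Real hiding exp

noncomputable def rodrigues {R : Type*} [Ring R] [Algebra ℝ R] (A : R) (θ t : ℝ) : R :=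
  1 + (sin (θ * t) / θ) • A + ((1 - cos (θ * t)) / θ ^ 2) • (A * A)

section Rodrigues

variable {𝔸 : Type*} [NormedRing 𝔸] [NormedAlgebra ℝ 𝔸] {A : 𝔸} {θ : ℝ}

theorem hasDerivAt_rodrigues (hθ : θ ≠ 0) (hA : A * A * A = -(θ ^ 2) • A) (u : ℝ) :
    HasDerivAt (rodrigues A θ) (A * rodrigues A θ u) u := by
  have hlin : HasDerivAt (fun t => θ * t) θ u := by simpa using (hasDerivAt_id u).const_mul θ
  have hsin : HasDerivAt (fun t => sin (θ * t) / θ) (cos (θ * u)) u :=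
    (hlin.sin.div_const θ).congr_deriv (by field_simp)
  have hcos : HasDerivAt (fun t => (1 - cos (θ * t)) / θ ^ 2) (sin (θ * u) / θ) u :=
    ((hlin.cos.const_sub 1).div_const (θ ^ 2)).congr_deriv (by field_simp)
  refine ((hasDerivAt_const u 1).fun_add (hsin.smul_const A) |>.fun_add
    (hcos.smul_const (A * A))).congr_deriv ?_
  simp only [rodrigues, mul_add, mul_one, mul_smul_comm, ← mul_assoc, hA, smul_smul]
  match_scalars <;> field_simp; ring

theorem exp_smul_eq_rodrigues [CompleteSpace 𝔸] (hθ : θ ≠ 0) (hA : A * A * A = -(θ ^ 2) • A)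
    (t : ℝ) : exp (t • A) = rodrigues A θ t := by
  -- needed by `exp_add_of_commute`
  let +nondep : NormedAlgebra ℚ 𝔸 := .restrictScalars ℚ ℝ 𝔸
  -- `rodrigues A θ` solves `g' = A g` like `u ↦ exp (u A)` does, so `exp (-u A) * g u` is constant.
  have hderiv (u : ℝ) : HasDerivAt (fun u => exp (u • -A) * rodrigues A θ u) 0 u := by
    refine ((hasDerivAt_exp_smul_const (-A) u).fun_mul
      (hasDerivAt_rodrigues hθ hA u)).congr_deriv ?_
    rw [mul_assoc, ← mul_add, neg_mul, neg_add_cancel, mul_zero]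
  have hconst : exp (t • -A) * rodrigues A θ t = 1 := by
    simpa [rodrigues] using is_const_of_deriv_eq_zero
      (fun u => (hderiv u).differentiableAt) (fun u => (hderiv u).deriv) t 0
  have hinv : exp (t • A) * exp (t • -A) = 1 := by
    rw [smul_neg, ← NormedSpace.exp_add_of_commute (Commute.refl _).neg_right, add_neg_cancel,
      NormedSpace.exp_zero]
  calc exp (t • A) = exp (t • A) * (exp (t • -A) * rodrigues A θ t) := by rw [hconst, mul_one]
    _ = rodrigues A θ t := by rw [← mul_assoc, hinv, one_mul]

end Rodrigues

namespace Matrix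

variable {n : Type*} [Fintype n] [DecidableEq n] {A : Matrix n n ℝ} {θ : ℝ}

theorem exp_smul_eq_rodrigues (hθ : θ ≠ 0) (hA : A * A * A = -(θ ^ 2) • A) (t : ℝ) :
    exp (t • A) = rodrigues A θ t := by
  -- `exp` only sees the topology, so any submultiplicative norm will do.
  let : NormedRing (Matrix n n ℝ) := Matrix.linftyOpNormedRing
  let : NormedAlgebra ℝ (Matrix n n ℝ) := Matrix.linftyOpNormedAlgebra
  exact _root_.exp_smul_eq_rodrigues hθ hA t

theorem integral_exp_smul_sub_one_apply (hθ : θ ≠ 0) (hA : A * A * A = -(θ ^ 2) • A) {ω : ℝ}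
    (hsin : sin (θ * ω) = 0) (hcos : cos (θ * ω) = 1) (i j : n) :
    ∫ s in (0 : ℝ)..ω, (exp (s • A) - 1) i j = ω / θ ^ 2 * (A * A) i j := by
  have hentry (s : ℝ) : (exp (s • A) - 1) i j =
      A i j / θ * sin (θ * s) + (A * A) i j / θ ^ 2 * (1 - cos (θ * s)) := by
    rw [exp_smul_eq_rodrigues hθ hA, rodrigues]
    simp only [sub_apply, add_apply, smul_apply, smul_eq_mul]
    ring
  have hint_sin : ∫ s in (0 : ℝ)..ω, sin (θ * s) = 0 := by
    simp [intervalIntegral.integral_comp_mul_left sin hθ, integral_sin, hcos]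
  have hint_cos : ∫ s in (0 : ℝ)..ω, cos (θ * s) = 0 := by
    simp [intervalIntegral.integral_comp_mul_left cos hθ, integral_cos, hsin]
  simp only [hentry]
  rw [intervalIntegral.integral_add ((by fun_prop : Continuous _).intervalIntegrable _ _)
      ((by fun_prop : Continuous _).intervalIntegrable _ _),
    intervalIntegral.integral_const_mul, intervalIntegral.integral_const_mul,
    intervalIntegral.integral_sub intervalIntegrable_const
      ((by fun_prop : Continuous _).intervalIntegrable _ _),
    hint_sin, hint_cos, intervalIntegral.integral_const]
  simp only [sub_zero, smul_eq_mul]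
  ring

end Matrix

def darbouxMatrix (kg kn τg ε : ℝ) : Matrix (Fin 3) (Fin 3) ℝ :=
  !![0, kg, -ε * kn; kg, 0, ε * τg; kn, τg, 0]

theorem darbouxMatrix_mul_self (kg kn ε : ℝ) :
    darbouxMatrix kg kn 0 ε * darbouxMatrix kg kn 0 ε =
      !![kg ^ 2 - ε * kn ^ 2, 0, 0; 0, kg ^ 2, -ε * kg * kn; 0, kn * kg, -ε * kn ^ 2] := by
  simp only [darbouxMatrix, mul_zero, mul_fin_three]
  congr 1
  ring_nf

theorem darbouxMatrix_mul_self_mul_self (kg kn ε : ℝ) :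
    darbouxMatrix kg kn 0 ε * darbouxMatrix kg kn 0 ε * darbouxMatrix kg kn 0 ε =
      -(ε * kn ^ 2 - kg ^ 2) • darbouxMatrix kg kn 0 ε := by
  rw [darbouxMatrix_mul_self]
  simp only [darbouxMatrix, mul_zero, mul_fin_three, smul_of, smul_cons, smul_empty, smul_eq_mul]
  congr 1
  ring_nf

theorem stmt_9_general (kg kn τg ε : ℝ)
    (A : Matrix (Fin 3) (Fin 3) ℝ)
    (hA : A = !![0, kg, -ε * kn; kg, 0, ε * τg; kn, τg, 0])
    (ω : ℝ) (hω : 0 < ω)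
    (hτ : τg = 0) (hpos : 0 < ε * kn ^ 2 - kg ^ 2)
    (k : ℤ)
    (hfreq : Real.sqrt (ε * kn ^ 2 - kg ^ 2) = 2 * k * Real.pi / ω) :
    NormedSpace.exp (ω • A) = 1 ∧
      (∫ s in (0:ℝ)..ω, (NormedSpace.exp (s • A) - 1) 0 0) = -ω ∧
      (∫ s in (0:ℝ)..ω, (NormedSpace.exp (s • A) - 1) 0 1) = 0 ∧
      (∫ s in (0:ℝ)..ω, (NormedSpace.exp (s • A) - 1) 0 2) = 0 := by
  replace hA : A = darbouxMatrix kg kn 0 ε := by rw [hA, hτ, darbouxMatrix]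
  set θ := √(ε * kn ^ 2 - kg ^ 2)
  have hθ : θ ≠ 0 := (Real.sqrt_pos.2 hpos).ne'
  have hθsq : θ ^ 2 = ε * kn ^ 2 - kg ^ 2 := Real.sq_sqrt hpos.le
  have hA3 : A * A * A = -(θ ^ 2) • A := by
    rw [hθsq, hA]
    exact darbouxMatrix_mul_self_mul_self kg kn ε
  have hθω : θ * ω = k * (2 * π) := by rw [hfreq]; field_simp [hω.ne']
  have hcos : cos (θ * ω) = 1 := by rw [hθω]; exact cos_int_mul_two_pi k
  have hsin : sin (θ * ω) = 0 := by rw [hθω, sin_periodic.int_mul_eq, sin_zero]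
  have hrow (j : Fin 3) : ∫ s in (0 : ℝ)..ω, (exp (s • A) - 1) 0 j =
      -ω * (1 : Matrix (Fin 3) (Fin 3) ℝ) 0 j := by
    rw [integral_exp_smul_sub_one_apply hθ hA3 hsin hcos, hA, darbouxMatrix_mul_self,
      show kg ^ 2 - ε * kn ^ 2 = -θ ^ 2 by linarith]
    fin_cases j <;> simp [one_apply, hθ]
  refine ⟨?_, (hrow 0).trans (by simp), (hrow 1).trans (by simp), (hrow 2).trans (by simp)⟩
  rw [Matrix.exp_smul_eq_rodrigues hθ hA3, rodrigues, hsin, hcos]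
  simp

/-- Sufficiency direction of the closedness criterion: if `τ_g = 0`, `ε k_n² − k_g² > 0` and
`√(ε k_n² − k_g²) = 2kπ/ω` for some nonzero integer `k`, then `exp(ωA) = I` and the first row
of `∫₀^ω (exp(sA) − I) ds` is `(−ω, 0, 0)`. -/
theorem stmt_9 (kg kn τg ε : ℝ) (hε : ε = 1 ∨ ε = -1)
    (A : Matrix (Fin 3) (Fin 3) ℝ)
    (hA : A = !![0, kg, -ε * kn; kg, 0, ε * τg; kn, τg, 0])
    (ω : ℝ) (hω : 0 < ω)
    (hτ : τg = 0) (hpos : 0 < ε * kn ^ 2 - kg ^ 2)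
    (k : ℤ) (hk : k ≠ 0)
    (hfreq : Real.sqrt (ε * kn ^ 2 - kg ^ 2) = 2 * k * Real.pi / ω) :
    NormedSpace.exp (ω • A) = 1 ∧
      (∫ s in (0:ℝ)..ω, (NormedSpace.exp (s • A) - 1) 0 0) = -ω ∧
      (∫ s in (0:ℝ)..ω, (NormedSpace.exp (s • A) - 1) 0 1) = 0 ∧
      (∫ s in (0:ℝ)..ω, (NormedSpace.exp (s • A) - 1) 0 2) = 0 :=
  stmt_9_general kg kn τg ε A hA ω hω hτ hpos k hfreq
end

section
/- Let A : ℝ → Matrix (Fin n) (Fin n) ℝ be continuous and ω-periodic with fundamental solution Φ (Φ' = AΦ, Φ(0) = I), and suppose Φ(ω) = I. Let a ∈ GL(n, ℝ) and set V₁(s) = (Φ(s)·a) first row, x(s) = ∫₀^s V₁. Then x is ω-periodic if and only if the first row of ∫₀^ω Φ(s) ds · a is zero, which (since a is invertible) holds iff the first row of ∫₀^ω Φ(s) ds is zero, i.e., writing m = Φ − I, iff ω + ∫₀^ω m₁₁ = 0 and ∫₀^ω m₁ⱼ = 0 for j ≥ 2. -/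
open Matrix MeasureTheory Set

attribute [local instance] Matrix.normedAddCommGroup Matrix.normedSpace

private lemma aux_norm_mul {m : ℕ} (P Q : Matrix (Fin m) (Fin m) ℝ) (c : ℝ) (hc : 0 ≤ c)
    (hP : ∀ i j, ‖P i j‖ ≤ c) : ‖P * Q‖ ≤ (m : ℝ) * c * ‖Q‖ := by
  rw [Matrix.norm_le_iff (by positivity)]
  intro i j
  rw [Matrix.mul_apply]
  calc ‖∑ k, P i k * Q k j‖ ≤ ∑ k, ‖P i k * Q k j‖ := norm_sum_le _ _
    _ ≤ ∑ _k : Fin m, c * ‖Q‖ := Finset.sum_le_sum fun k _ => by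
        rw [norm_mul]
        exact mul_le_mul (hP i k) (Matrix.norm_entry_le_entrywise_sup_norm Q)
          (norm_nonneg _) hc
    _ = (m : ℝ) * c * ‖Q‖ := by
        simp [Finset.sum_const, mul_assoc]

/-- Abstract form of the closedness criterion (Theorem 3.2): with `Φ' = AΦ`, `Φ(0) = I`,
`A` continuous and ω-periodic, `Φ(ω) = I`, `a` invertible, `V₁(s) = (Φ(s)·a)` first row and
`x(s) = ∫₀^s V₁`, the curve `x` is ω-periodic iff the first row of `(∫₀^ω Φ)·a` vanishes, iff
the first row of `∫₀^ω Φ` vanishes, i.e. `ω + ∫₀^ω m₁₁ = 0` and `∫₀^ω m₁ⱼ = 0` for `j ≥ 2`,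
where `m = Φ − I`. -/
theorem stmt_19 {n : ℕ} (ω : ℝ) (hω : 0 < ω)
    (A Φ : ℝ → Matrix (Fin (n+1)) (Fin (n+1)) ℝ)
    (hAcont : Continuous fun s => A s)
    (hAper : ∀ s, A (s + ω) = A s)
    (hΦ : ∀ s i j, HasDerivAt (fun t => Φ t i j) ((A s * Φ s) i j) s)
    (hΦ0 : Φ 0 = 1)
    (hΦω : Φ ω = 1)
    (a : Matrix (Fin (n+1)) (Fin (n+1)) ℝ) (ha : IsUnit a)
    (x : ℝ → Fin (n+1) → ℝ)
    (hx : ∀ s, x s = ∫ t in (0:ℝ)..s, (Φ t * a) 0) :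
    ((∀ s, x (s + ω) = x s) ↔ ∀ j, (∫ s in (0:ℝ)..ω, (Φ s * a) 0 j) = 0) ∧
    ((∀ j, (∫ s in (0:ℝ)..ω, (Φ s * a) 0 j) = 0) ↔
      (∀ j, (∫ s in (0:ℝ)..ω, Φ s 0 j) = 0)) ∧
    ((∀ j, (∫ s in (0:ℝ)..ω, Φ s 0 j) = 0) ↔
      (ω + (∫ s in (0:ℝ)..ω, (Φ s - 1) 0 0) = 0 ∧
        ∀ j, j ≠ 0 → (∫ s in (0:ℝ)..ω, (Φ s - 1) 0 j) = 0)) := by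
  -- continuity of the entries of Φ
  have hΦc : ∀ i j, Continuous fun s => Φ s i j := fun i j =>
    continuous_iff_continuousAt.2 fun s => (hΦ s i j).continuousAt
  have hΦcont : Continuous Φ := continuous_pi fun i => continuous_pi fun j => hΦc i j
  -- matrix-valued derivative
  have hΦ' : ∀ s, HasDerivAt Φ (A s * Φ s) s := fun s =>
    hasDerivAt_pi.2 fun i => hasDerivAt_pi.2 fun j => hΦ s i j
  -- a global bound on ‖A t‖
  obtain ⟨C, hC⟩ := (isCompact_Icc (a := (0:ℝ)) (b := ω)).exists_bound_of_continuousOn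
    hAcont.continuousOn
  have hAper' : Function.Periodic A ω := hAper
  have hCg : ∀ t, ‖A t‖ ≤ max C 0 := by
    intro t
    obtain ⟨y, hy, hEq⟩ := hAper'.exists_mem_Ico₀ hω t
    rw [hEq]
    exact le_max_of_le_left (hC y ⟨hy.1, hy.2.le⟩)
  -- Lipschitz bound for the linear vector field M ↦ A t * M
  set K : NNReal := ⟨(n + 1 : ℝ) * max C 0, by positivity⟩ with hK
  have hLip : ∀ t, LipschitzWith K fun M : Matrix (Fin (n+1)) (Fin (n+1)) ℝ => A t * M := by
    intro t
    apply LipschitzWith.of_dist_le_mul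
    intro M N
    rw [dist_eq_norm, dist_eq_norm, ← mul_sub]
    have : ‖A t * (M - N)‖ ≤ ((n + 1 : ℕ) : ℝ) * max C 0 * ‖M - N‖ :=
      aux_norm_mul (A t) (M - N) (max C 0) (le_max_right _ _)
        (fun i j => (Matrix.norm_entry_le_entrywise_sup_norm (A t)).trans (hCg t))
    exact this.trans_eq (by rw [hK]; push_cast; rfl)
  -- periodicity of Φ, via uniqueness of solutions of the linear ODE
  have hper : ∀ s : ℝ, Φ (s + ω) = Φ s := by
    intro s
    set T : ℝ := |s| + 1 with hT
    have habs : -T ≤ s ∧ s ≤ T := by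
      constructor <;> cases abs_cases s <;> simp [hT] <;> linarith
    have hT0 : (0:ℝ) ∈ Ioo (-T) T := by
      constructor <;> have := abs_nonneg s <;> simp [hT] <;> linarith
    have key := ODE_solution_unique_of_mem_Icc
      (v := fun t (M : Matrix (Fin (n+1)) (Fin (n+1)) ℝ) => A t * M)
      (s := fun _ => Set.univ) (K := K)
      (fun t _ => by beta_reduce; exact lipschitzOnWith_univ.mpr (hLip t))
      (f := fun t => Φ (t + ω)) (g := Φ) (t₀ := 0) (a := -T) (b := T)
      hT0
      ((hΦcont.comp (continuous_id.add continuous_const)).continuousOn)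
      (fun t _ => by
        have h1 : HasDerivAt (fun u : ℝ => u + ω) 1 t := (hasDerivAt_id t).add_const ω
        have h2 := (hΦ' (t + ω)).scomp t h1
        rw [one_smul] at h2
        simpa [hAper t, Function.comp_def] using h2)
      (fun _ _ => Set.mem_univ _)
      hΦcont.continuousOn
      (fun t _ => hΦ' t)
      (fun _ _ => Set.mem_univ _)
      (by simp [hΦω, hΦ0])
    exact key ⟨habs.1, habs.2⟩
  -- integrability and componentwise description of x
  have hFc : ∀ j, Continuous fun s => (Φ s * a) 0 j := by
    intro j
    simp only [Matrix.mul_apply]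
    exact continuous_finset_sum _ fun k _ => (hΦc 0 k).mul continuous_const
  have hFint : ∀ j (t₁ t₂ : ℝ), IntervalIntegrable (fun s => (Φ s * a) 0 j) volume t₁ t₂ :=
    fun j t₁ t₂ => (hFc j).intervalIntegrable t₁ t₂
  have hVint : ∀ t₁ t₂ : ℝ, IntervalIntegrable (fun s => (Φ s * a) 0) volume t₁ t₂ :=
    fun t₁ t₂ => (continuous_pi fun j => hFc j).intervalIntegrable t₁ t₂
  have hxapply : ∀ s j, x s j = ∫ t in (0:ℝ)..s, (Φ t * a) 0 j := by
    intro s j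
    rw [hx s]
    have := ContinuousLinearMap.intervalIntegral_comp_comm
      (ContinuousLinearMap.proj (R := ℝ) (φ := fun _ : Fin (n+1) => ℝ) j) (hVint 0 s)
    simpa using this.symm
  refine ⟨?_, ?_, ?_⟩
  · -- part 1
    constructor
    · intro hp j
      have h0' := hp 0
      rw [zero_add] at h0'
      have := congrFun h0' j
      rw [hxapply, hxapply] at this
      simpa using this
    · intro hz s
      funext j
      rw [hxapply, hxapply]
      have hperF : Function.Periodic (fun t => (Φ t * a) 0 j) ω := fun t => by
        simp [hper t]
      have heq := hperF.intervalIntegral_add_eq s 0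
      rw [zero_add] at heq
      rw [← intervalIntegral.integral_add_adjacent_intervals (hFint j 0 s) (hFint j s (s + ω)),
        heq, hz j, add_zero]
  · -- part 2
    have key : ∀ j, (∫ s in (0:ℝ)..ω, (Φ s * a) 0 j)
        = ∑ k, (∫ s in (0:ℝ)..ω, Φ s 0 k) * a k j := by
      intro j
      simp only [Matrix.mul_apply]
      rw [intervalIntegral.integral_finset_sum
        (f := fun k s => Φ s 0 k * a k j)
        (fun k _ => ((hΦc 0 k).mul continuous_const).intervalIntegrable 0 ω)]
      exact Finset.sum_congr rfl fun k _ => intervalIntegral.integral_mul_const _ _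
    set r : Fin (n+1) → ℝ := fun k => ∫ s in (0:ℝ)..ω, Φ s 0 k with hr
    constructor
    · intro h j
      have hva : r ᵥ* a = 0 := by
        funext j'
        have hj' := h j'
        rw [key] at hj'
        simpa [Matrix.vecMul, dotProduct, hr] using hj'
      have hu : a * (↑ha.unit⁻¹ : Matrix (Fin (n+1)) (Fin (n+1)) ℝ) = 1 := ha.mul_val_inv
      have hr0 : r = 0 := by
        calc r = r ᵥ* 1 := (Matrix.vecMul_one r).symm
          _ = (r ᵥ* a) ᵥ* (↑ha.unit⁻¹ : Matrix (Fin (n+1)) (Fin (n+1)) ℝ) := by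
              rw [Matrix.vecMul_vecMul, hu]
          _ = 0 := by rw [hva, Matrix.zero_vecMul]
      exact congrFun hr0 j
    · intro h j
      rw [key]
      simp [show ∀ k, (∫ s in (0:ℝ)..ω, Φ s 0 k) = 0 from h]
  · -- part 3
    have hsub : ∀ j, (∫ s in (0:ℝ)..ω, (Φ s - 1) 0 j)
        = (∫ s in (0:ℝ)..ω, Φ s 0 j) - ω * (1 : Matrix (Fin (n+1)) (Fin (n+1)) ℝ) 0 j := by
      intro j
      have hent : ∀ s : ℝ, (Φ s - 1) 0 j
          = Φ s 0 j - (1 : Matrix (Fin (n+1)) (Fin (n+1)) ℝ) 0 j := fun s => rfl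
      simp only [hent]
      rw [intervalIntegral.integral_sub ((hΦc 0 j).intervalIntegrable _ _)
        intervalIntegrable_const, intervalIntegral.integral_const]
      simp [smul_eq_mul]
    constructor
    · intro h
      refine ⟨?_, ?_⟩
      · rw [hsub 0, h 0, Matrix.one_apply_eq]
        ring
      · intro j hj
        rw [hsub j, h j, Matrix.one_apply_ne (Ne.symm hj)]
        ring
    · rintro ⟨h0, hj⟩ j
      by_cases hcase : j = 0
      · subst hcase
        rw [hsub 0, Matrix.one_apply_eq] at h0
        linarith
      · have := hj j hcase
        rw [hsub j, Matrix.one_apply_ne (Ne.symm hcase)] at this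
        linarith
end
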